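/- arXiv:2309.08850 — 5 statements merged into one kernel-verified Lean document; each statement's English description precedes it below -/
import Mathlib

section
/- For every index i with 1 ≤ i ≤ N the following identity holds in ℂ: Σ_{v : {1,…,N} → {1,…,L}} det(B_v) · F(v, i) + Σ_{j=1}^{M} B_{N+j, i} · ( Σ_{v : {1,…,N} → {1,…,L}} det(B_v) · F(v, N+j) ) = 0, where the sums run over all maps v (not only injective ones), and (v, k) denotes the map {1,…,N+1} → {1,…,L} sending r ↦ v(r) for r ≤ N and N+1 ↦ k. (This determinantal identity is the algebraic content of Lemma 7.1: after expanding the tau function τ(t) = Σ_I B_I Δ_I^− e^{η_I} τ₀(t−[p_I]) it yields the relation τ(t−[p_i])e^{η_i} = −Σ_{j=1}^{M} b̃_{N+j,i} τ(t−[p_{N+j}])e^{η_{N+j}} for the wave function.) -/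
/-!
Expanding `det(B_v) = Σ_σ sign σ · ∏_r B_{v(σ r), r}` and reindexing `v ↦ v ∘ σ`, the
alternating property of `F` turns every determinant into the diagonal product `∏_r B_{v r, r}`,
up to the factor `N!`. Since the upper block of `B` is the identity, the left-hand side becomes
`N!` times `Σ_w (∏_{r ≤ N} B_{w r, r}) · B_{w (N+1), i} · F(w)` over all
`w : {1,…,N+1} → {1,…,L}`. In this product the factors at the positions `i` and `N+1` are given
by the same column of `B`, so precomposing `w` with the transposition of these positions fixes
the product and flips the sign of `F`: the sum vanishes.
-/

open Finset

theorem Fin.snoc_comp_extendDomain {α : Type*} {n : ℕ} (τ : Equiv.Perm (Fin n)) (v : Fin n → α)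
    (k : α) :
    (Fin.snoc v k : Fin (n + 1) → α) ∘ τ.extendDomain (finSuccAboveEquiv (Fin.last n))
      = Fin.snoc (v ∘ τ) k := by
  funext s
  induction s using Fin.lastCases with
  | last =>
    rw [Function.comp_apply, Equiv.Perm.extendDomain_apply_not_subtype _ _ (by simp)]
    simp
  | cast r =>
    have h := Equiv.Perm.extendDomain_apply_image τ (finSuccAboveEquiv (Fin.last n)) r
    simp only [finSuccAboveEquiv_apply, Fin.succAbove_last] at h
    simp [h]

variable {ι α R : Type*} [Fintype ι] [DecidableEq ι] [CommRing R]

def IsAlternating (F : (ι → α) → R) : Prop :=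
  ∀ (w : ι → α) (σ : Equiv.Perm ι), F (w ∘ σ) = (Equiv.Perm.sign σ : ℤ) * F w

namespace IsAlternating

theorem snoc {n : ℕ} {F : (Fin (n + 1) → α) → R} (hF : IsAlternating F) (k : α) :
    IsAlternating fun v : Fin n → α => F (Fin.snoc v k) := fun v τ => by
  change F (Fin.snoc (v ∘ τ) k) = _ * F (Fin.snoc v k)
  rw [← Fin.snoc_comp_extendDomain, hF, Equiv.Perm.sign_extendDomain]

variable [Fintype α]

theorem sum_prod_mul_eq_zero [NoZeroDivisors R] [CharZero R] {F : (ι → α) → R}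
    (hF : IsAlternating F) (d : ι → α → R) {a b : ι} (hab : a ≠ b) (hd : d a = d b) :
    ∑ w : ι → α, (∏ s, d s (w s)) * F w = 0 := by
  set τ := Equiv.swap a b
  have hdτ : ∀ s, d (τ s) = d s := by
    intro s
    rw [Equiv.swap_apply_def]
    split_ifs with hsa hsb
    · rw [hsa, hd]
    · rw [hsb, hd]
    · rfl
  have hprod : ∀ w : ι → α, ∏ s, d s ((w ∘ τ) s) = ∏ s, d s (w s) := fun w =>
    calc ∏ s, d s (w (τ s)) = ∏ s, d (τ s) (w (τ s)) := by simp only [hdτ]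
      _ = ∏ s, d s (w s) := Equiv.prod_comp τ fun s => d s (w s)
  have hinv : Function.Involutive fun w : ι → α => w ∘ τ := fun w => by
    funext s
    simp [τ]
  rw [← self_eq_neg]
  calc ∑ w : ι → α, (∏ s, d s (w s)) * F w
      = ∑ w : ι → α, (∏ s, d s ((w ∘ τ) s)) * F (w ∘ τ) :=
        (Fintype.sum_bijective _ hinv.bijective _ _ fun _ => rfl).symm
    _ = -∑ w : ι → α, (∏ s, d s (w s)) * F w := by
        simp only [hprod, hF _ τ, τ, Equiv.Perm.sign_swap hab, Units.val_neg, Units.val_one,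
          Int.cast_neg, Int.cast_one, neg_one_mul, mul_neg, sum_neg_distrib]

theorem sum_det_mul {G : (ι → α) → R} (hG : IsAlternating G) (B : Matrix α ι R) :
    ∑ v : ι → α, (Matrix.of fun r s => B (v r) s).det * G v
      = Fintype.card (Equiv.Perm ι) * ∑ v : ι → α, (∏ r, B (v r) r) * G v := by
  have hσ : ∀ σ : Equiv.Perm ι,
      ∑ v : ι → α, (Equiv.Perm.sign σ : ℤ) * (∏ r, B (v (σ r)) r) * G v
        = ∑ v : ι → α, (∏ r, B (v r) r) * G v := fun σ =>
    Fintype.sum_equiv (σ.symm.arrowCongr (Equiv.refl α)) _ _ fun v => by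
      change _ = (∏ r, B ((v ∘ σ) r) r) * G (v ∘ σ)
      rw [hG v σ, Function.comp_def]
      ring
  simp only [Matrix.det_apply', Matrix.of_apply, sum_mul]
  rw [sum_comm, sum_congr rfl fun σ _ => hσ σ, sum_const, card_univ, nsmul_eq_mul]

theorem sum_mul_sum_snoc_eq_zero [NoZeroDivisors R] [CharZero R] {n : ℕ}
    {F : (Fin (n + 1) → α) → R} (hF : IsAlternating F) (c : Fin n → α → R) (i : Fin n) :
    ∑ k : α, c i k * ∑ v : Fin n → α, (∏ r, c r (v r)) * F (Fin.snoc v k) = 0 := by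
  set d := Fin.snoc (α := fun _ => α → R) c (c i)
  calc ∑ k : α, c i k * ∑ v : Fin n → α, (∏ r, c r (v r)) * F (Fin.snoc v k)
      = ∑ p : α × (Fin n → α),
          (∏ s, d s ((Fin.snoc p.2 p.1 : Fin (n + 1) → α) s)) * F (Fin.snoc p.2 p.1) := by
        simp [d, Fintype.sum_prod_type, Fin.prod_univ_castSucc, mul_sum, mul_comm, mul_left_comm]
    _ = ∑ w : Fin (n + 1) → α, (∏ s, d s (w s)) * F w :=
        Fintype.sum_equiv (Fin.snocEquiv fun _ => α) _ _ fun _ => rfl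
    _ = 0 := hF.sum_prod_mul_eq_zero d (Fin.castSucc_lt_last i).ne (by simp [d])

end IsAlternating

theorem lemma_7_1_determinantal_identity_general (N M : ℕ)
    (B : Matrix (Fin (N + M)) (Fin N) ℂ)
    (hB : ∀ i j : Fin N, B (Fin.castAdd M i) j = if i = j then 1 else 0)
    (F : (Fin (N + 1) → Fin (N + M)) → ℂ)
    (hF : ∀ (w : Fin (N + 1) → Fin (N + M)) (σ : Equiv.Perm (Fin (N + 1))),
      F (w ∘ σ) = (Equiv.Perm.sign σ : ℤ) * F w)
    (i : Fin N) :
    (∑ v : Fin N → Fin (N + M),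
        (Matrix.of fun r s : Fin N => B (v r) s).det * F (Fin.snoc v (Fin.castAdd M i)))
      + ∑ j : Fin M, B (Fin.natAdd N j) i *
          ∑ v : Fin N → Fin (N + M),
            (Matrix.of fun r s : Fin N => B (v r) s).det * F (Fin.snoc v (Fin.natAdd N j))
      = 0 := by
  have hF : IsAlternating F := hF
  have hvanish := hF.sum_mul_sum_snoc_eq_zero (fun r a => B a r) i
  simp only [Fin.sum_univ_add, hB, ite_mul, one_mul, zero_mul, sum_ite_eq', mem_univ,
    if_true] at hvanish
  simp only [fun k => (hF.snoc k).sum_det_mul B, mul_left_comm _ (Fintype.card _ : ℂ),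
    ← mul_sum]
  linear_combination (Fintype.card (Equiv.Perm (Fin N)) : ℂ) * hvanish

theorem lemma_7_1_determinantal_identity (N M : ℕ) (hN : 1 ≤ N) (hM : 1 ≤ M)
    (B : Matrix (Fin (N + M)) (Fin N) ℂ)
    (hB : ∀ i j : Fin N, B (Fin.castAdd M i) j = if i = j then 1 else 0)
    (F : (Fin (N + 1) → Fin (N + M)) → ℂ)
    (hF : ∀ (w : Fin (N + 1) → Fin (N + M)) (σ : Equiv.Perm (Fin (N + 1))),
      F (w ∘ σ) = (Equiv.Perm.sign σ : ℤ) * F w)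
    (i : Fin N) :
    (∑ v : Fin N → Fin (N + M),
        (Matrix.of fun r s : Fin N => B (v r) s).det * F (Fin.snoc v (Fin.castAdd M i)))
      + ∑ j : Fin M, B (Fin.natAdd N j) i *
          ∑ v : Fin N → Fin (N + M),
            (Matrix.of fun r s : Fin N => B (v r) s).det * F (Fin.snoc v (Fin.natAdd N j))
      = 0 :=
  lemma_7_1_determinantal_identity_general N M B hB F hF i
end

section
/- Assume that for every m ∈ {1,…,M} there exists φ_m ∈ W such that φ_m(q_l) = δ_{l,m} for all l ∈ {1,…,M} and φ_m(p_i) = −c_{m,i} for all i ∈ {1,…,N}. Then the stabilizer {f ∈ R : f·F ∈ W for all F ∈ W} is equal to {f ∈ R : for all i, j, if c_{j,i} ≠ 0 then f(p_i) = f(q_j)}. (Proposition 4.1) -/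
section LinearRelations

variable {X K ι κ : Type*} [CommRing K] [Fintype κ]
  (p : ι → X) (q : κ → X) (c : κ → ι → K)

def SatisfiesRelation (F : X → K) (i : ι) : Prop :=
  F (p i) = -∑ j, c j i * F (q j)

variable {p q c}

theorem SatisfiesRelation.mul {f F : X → K} {i : ι} (hF : SatisfiesRelation p q c F i)
    (hf : ∀ j, c j i ≠ 0 → f (p i) = f (q j)) : SatisfiesRelation p q c (f * F) i := by
  unfold SatisfiesRelation at hF ⊢
  rw [Pi.mul_apply, hF, mul_neg, Finset.mul_sum, neg_inj]
  refine Finset.sum_congr rfl fun j _ => ?_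
  by_cases hc : c j i = 0
  · simp [hc]
  · rw [Pi.mul_apply, hf j hc]
    ring

/-- Testing the relation at `i` on `f * φ`, where `φ` is the solution dual to `q m`, isolates the
single term `c m i * f (q m)` on the right-hand side. -/
theorem SatisfiesRelation.eq_of_mul_dual [IsDomain K] [DecidableEq κ] {f φ : X → K} {i : ι}
    {m : κ} (hφq : ∀ l, φ (q l) = if l = m then 1 else 0) (hφp : φ (p i) = -c m i)
    (h : SatisfiesRelation p q c (f * φ) i) (hc : c m i ≠ 0) : f (p i) = f (q m) := by
  have hsum : ∑ j, c j i * (f * φ) (q j) = c m i * f (q m) := by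
    simp [Pi.mul_apply, hφq]
  unfold SatisfiesRelation at h
  rw [hsum, Pi.mul_apply, hφp, mul_neg, neg_inj, mul_comm] at h
  exact mul_left_cancel₀ hc h

end LinearRelations

theorem prop_4_1_general {X : Type*} (N M : ℕ)
    (p : Fin N → X) (q : Fin M → X) (c : Fin M → Fin N → ℂ)
    (R : Subring (X → ℂ)) (H : Submodule ℂ (X → ℂ))
    (hRH : ∀ f ∈ R, ∀ F ∈ H, f * F ∈ H)
    (W : Set (X → ℂ))
    (hW : W = {F | F ∈ H ∧ ∀ i, F (p i) = -∑ j, c j i * F (q j)})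
    (φ : Fin M → (X → ℂ))
    (hφW : ∀ m, φ m ∈ W)
    (hφq : ∀ m l, φ m (q l) = if l = m then 1 else 0)
    (hφp : ∀ m i, φ m (p i) = -c m i) :
    {f | f ∈ R ∧ ∀ F ∈ W, f * F ∈ W} =
      {f | f ∈ R ∧ ∀ (i : Fin N) (j : Fin M), c j i ≠ 0 → f (p i) = f (q j)} := by
  subst hW
  ext f
  refine ⟨fun ⟨hfR, hstab⟩ => ⟨hfR, fun i j hc => ?_⟩,
    fun ⟨hfR, hf⟩ => ⟨hfR, fun F hF => ⟨hRH f hfR F hF.1, fun i => ?_⟩⟩⟩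
  · exact SatisfiesRelation.eq_of_mul_dual (hφq j) (hφp j i) ((hstab _ (hφW j)).2 i) hc
  · exact SatisfiesRelation.mul (hF.2 i) (hf i)

theorem prop_4_1 {X : Type*} (N M : ℕ) (hN : 1 ≤ N) (hM : 1 ≤ M)
    (p : Fin N → X) (q : Fin M → X) (c : Fin M → Fin N → ℂ)
    (R : Subring (X → ℂ)) (H : Submodule ℂ (X → ℂ))
    (hRH : ∀ f ∈ R, ∀ F ∈ H, f * F ∈ H)
    (W : Set (X → ℂ))
    (hW : W = {F | F ∈ H ∧ ∀ i, F (p i) = -∑ j, c j i * F (q j)})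
    (φ : Fin M → (X → ℂ))
    (hφW : ∀ m, φ m ∈ W)
    (hφq : ∀ m l, φ m (q l) = if l = m then 1 else 0)
    (hφp : ∀ m i, φ m (p i) = -c m i) :
    {f | f ∈ R ∧ ∀ F ∈ W, f * F ∈ W} =
      {f | f ∈ R ∧ ∀ (i : Fin N) (j : Fin M), c j i ≠ 0 → f (p i) = f (q j)} :=
  prop_4_1_general N M p q c R H hRH W hW φ hφW hφq hφp
end

section
/- Fix an index i with n_i ≥ 2 and an index j with 1 ≤ j ≤ n_i, and suppose H_{i,j} ∈ R satisfies H_{i,j}(p_{k,l}) = δ_{i,k}δ_{j,l} for all k, l. Then there is no f ∈ R_e such that f(p_{i,j}) ≠ 0 and f·H_{i,j} ∈ R_e. (This shows H_{i,j} lies in the localization of R but not of R_e at the corresponding maximal ideal, so the local ring of R_e at the identified point is not normal; this is the key step of Proposition 4.9(ii).) -/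
theorem Pi.mul_apply_ne_of_eq_one_of_eq_zero {X M : Type*} [MulZeroOneClass M] {f H : X → M}
    {a b : X} (hf : f a ≠ 0) (ha : H a = 1) (hb : H b = 0) : (f * H) a ≠ (f * H) b := by
  simpa [ha, hb] using hf

theorem prop_4_9_ii_general {X : Type*} (s : ℕ)
    (n : Fin s → ℕ)
    (p : (i : Fin s) → Fin (n i) → X)
    (R : Subring (X → ℂ))
    (Re : Set (X → ℂ))
    (hRe : Re = {f | f ∈ R ∧ ∀ i j j', f (p i j) = f (p i j')})
    (i : Fin s) (hni : 2 ≤ n i) (j : Fin (n i))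
    (H : X → ℂ)
    (hH : ∀ k l, H (p k l) =
      if (⟨i, j⟩ : Σ i : Fin s, Fin (n i)) = ⟨k, l⟩ then 1 else 0) :
    ¬ ∃ f, f ∈ Re ∧ f (p i j) ≠ 0 ∧ f * H ∈ Re := by
  rintro ⟨f, -, hfj, hfH⟩
  subst hRe
  have : Nontrivial (Fin (n i)) := Fin.nontrivial_iff_two_le.mpr hni
  obtain ⟨j', hj'⟩ := exists_ne j
  have hHj : H (p i j) = 1 := by simp [hH]
  have hHj' : H (p i j') = 0 := by simp [hH, hj'.symm]
  exact Pi.mul_apply_ne_of_eq_one_of_eq_zero hfj hHj hHj' (hfH.2 i j j')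

theorem prop_4_9_ii {X : Type*} (s : ℕ) (hs : 1 ≤ s)
    (n : Fin s → ℕ) (hn : ∀ i, 1 ≤ n i)
    (p : (i : Fin s) → Fin (n i) → X)
    (hp : Function.Injective fun x : Σ i : Fin s, Fin (n i) => p x.1 x.2)
    (R : Subring (X → ℂ))
    (Re : Set (X → ℂ))
    (hRe : Re = {f | f ∈ R ∧ ∀ i j j', f (p i j) = f (p i j')})
    (i : Fin s) (hni : 2 ≤ n i) (j : Fin (n i))
    (H : X → ℂ) (hHR : H ∈ R)
    (hH : ∀ k l, H (p k l) =
      if (⟨i, j⟩ : Σ i : Fin s, Fin (n i)) = ⟨k, l⟩ then 1 else 0) :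
    ¬ ∃ f, f ∈ Re ∧ f (p i j) ≠ 0 ∧ f * H ∈ Re :=
  prop_4_9_ii_general s n p R Re hRe i hni j H hH
end

section
/- P∞ is a prime ideal of the ring A. Moreover, if there exist an integer n ≥ 1 and h ∈ R with ord h = n, then P∞ does not contain the ideal A₊ = {P ∈ A : the coefficient of X⁰ in P is 0}. (This is the paper's claim in Section 4 that p'_∞ = ⊕_{n≥0} R_e(n−1) is a point of C' = Proj A'.) -/
/-!
Since `ord` is additive on products, the filtration `R(n)` has an associated graded ring without
zero divisors: if `f ∈ R(m) ∖ R(m-1)` and `g ∈ R(n) ∖ R(n-1)` then `fg ∈ R(m+n) ∖ R(m+n-1)`.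
For `P ∉ P∞` and `Q ∉ P∞` in `A`, let `i` and `j` be the least degrees at which the coefficients
`Pᵢ` and `Qⱼ` leave `R(i-1)` and `R(j-1)`. In the coefficient of `X^(i+j)` of `PQ` every term other
than `PᵢQⱼ` lies in `R(i+j-1)`, while `PᵢQⱼ` does not, so `PQ ∉ P∞`.
The argument is run for the twists `A(s) = ⊕ R(n+s)`, of which `A` and `P∞` are `A(0)` and `A(-1)`.
Finally `h Xⁿ` with `ord h = n ≥ 1` lies in `A₊` but not in `P∞`.
-/

noncomputable section

/-- `V = ℂ((z))`, the field of formal Laurent series over `ℂ`. -/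
abbrev VV : Type := LaurentSeries ℂ

/-- `ord f = -order f`: the order of the pole at `z = 0`. -/
def ordV (f : VV) : ℤ := -f.order

/-- `R(n) = {f ∈ R : f = 0 or ord f ≤ n}`. -/
def Rfilt (R : Subring VV) (n : ℤ) : Set VV := {f | f ∈ R ∧ (f = 0 ∨ ordV f ≤ n)}

/-- The model of the graded ring `A = ⊕_{n ≥ 0} R(n)` inside `V[X]`. -/
def Agr (R : Subring VV) : Set (Polynomial VV) :=
  {P | ∀ n : ℕ, P.coeff n ∈ Rfilt R n}

/-- The model of `P∞ = ⊕_{n ≥ 0} R(n-1)`. -/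
def Pinf (R : Subring VV) : Set (Polynomial VV) :=
  {P | ∀ n : ℕ, P.coeff n ∈ Rfilt R ((n : ℤ) - 1)}

open Polynomial Finset.HasAntidiagonal

lemma ordV_mul {f g : VV} (hf : f ≠ 0) (hg : g ≠ 0) :
    ordV (f * g) = ordV f + ordV g := by
  simp only [ordV, HahnSeries.order_mul hf hg]
  ring

lemma ordV_one : ordV 1 = 0 := by
  simp [ordV]

lemma ordV_add_le {f g : VV} (hfg : f + g ≠ 0) : ordV (f + g) ≤ max (ordV f) (ordV g) := by
  have := HahnSeries.min_order_le_order_add hfg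
  simp only [ordV, min_le_iff] at this ⊢
  omega

lemma Rfilt_mono (R : Subring VV) {m n : ℤ} (h : m ≤ n) : Rfilt R m ⊆ Rfilt R n :=
  fun _ hf => ⟨hf.1, hf.2.imp_right (·.trans h)⟩

def RfiltAddSubgroup (R : Subring VV) (n : ℤ) : AddSubgroup VV where
  carrier := Rfilt R n
  zero_mem' := ⟨R.zero_mem, Or.inl rfl⟩
  add_mem' {f g} hf hg := by
    refine ⟨R.add_mem hf.1 hg.1, or_iff_not_imp_left.2 fun hfg => ?_⟩
    rcases hf.2 with rfl | hf2
    · simpa using hg.2.resolve_left (by simpa using hfg)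
    rcases hg.2 with rfl | hg2
    · simpa using hf2
    exact (ordV_add_le hfg).trans (max_le hf2 hg2)
  neg_mem' {f} hf := ⟨R.neg_mem hf.1, by simpa [ordV, HahnSeries.order_neg] using hf.2⟩

lemma mul_mem_Rfilt (R : Subring VV) {m n : ℤ} {f g : VV} (hf : f ∈ Rfilt R m)
    (hg : g ∈ Rfilt R n) : f * g ∈ Rfilt R (m + n) := by
  refine ⟨R.mul_mem hf.1 hg.1, ?_⟩
  rcases hf.2 with rfl | hf2
  · simp
  rcases hg.2 with rfl | hg2
  · simp
  by_cases hf0 : f = 0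
  · simp [hf0]
  by_cases hg0 : g = 0
  · simp [hg0]
  exact Or.inr ((ordV_mul hf0 hg0).trans_le (add_le_add hf2 hg2))

lemma notMem_Rfilt_sub_one_iff (R : Subring VV) {n : ℤ} {f : VV} (hf : f ∈ Rfilt R n) :
    f ∉ Rfilt R (n - 1) ↔ f ≠ 0 ∧ ordV f = n := by
  rcases hf with ⟨hfR, rfl | hfn⟩
  · simp [Rfilt, R.zero_mem]
  simp only [Rfilt, Set.mem_ofPred_eq, hfR, true_and, not_or]
  constructor
  · rintro ⟨hf0, hlt⟩
    exact ⟨hf0, by omega⟩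
  · rintro ⟨hf0, rfl⟩
    exact ⟨hf0, by omega⟩

lemma notMem_Rfilt_ordV_sub_one (R : Subring VV) {f : VV} (hf0 : f ≠ 0) :
    f ∉ Rfilt R (ordV f - 1) := fun hf => by
  rcases hf.2 with h | h
  · exact hf0 h
  · omega

lemma mul_notMem_Rfilt_sub_one (R : Subring VV) {m n : ℤ} {f g : VV}
    (hf : f ∈ Rfilt R m) (hf' : f ∉ Rfilt R (m - 1))
    (hg : g ∈ Rfilt R n) (hg' : g ∉ Rfilt R (n - 1)) : f * g ∉ Rfilt R (m + n - 1) := by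
  obtain ⟨hf0, rfl⟩ := (notMem_Rfilt_sub_one_iff R hf).1 hf'
  obtain ⟨hg0, rfl⟩ := (notMem_Rfilt_sub_one_iff R hg).1 hg'
  exact (notMem_Rfilt_sub_one_iff R (mul_mem_Rfilt R hf hg)).2
    ⟨mul_ne_zero hf0 hg0, ordV_mul hf0 hg0⟩

/-- The graded `A`-module `A(s) = ⊕_{n ≥ 0} R(n + s)`, so that `A = A(0)` and `P∞ = A(-1)`. -/
def Atwist (R : Subring VV) (s : ℤ) : AddSubgroup VV[X] where
  carrier := {P | ∀ n : ℕ, P.coeff n ∈ Rfilt R (n + s)}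
  zero_mem' _ := (RfiltAddSubgroup R _).zero_mem
  add_mem' hP hQ n := by
    rw [coeff_add]
    exact (RfiltAddSubgroup R _).add_mem (hP n) (hQ n)
  neg_mem' hP n := by
    rw [coeff_neg]
    exact (RfiltAddSubgroup R _).neg_mem (hP n)

section Atwist

variable {R : Subring VV} {s t : ℤ} {P Q : VV[X]}

lemma mem_Atwist : P ∈ Atwist R s ↔ ∀ n : ℕ, P.coeff n ∈ Rfilt R (n + s) := Iff.rfl

variable (R) in
lemma coe_Atwist_zero : (Atwist R 0 : Set VV[X]) = Agr R := by
  ext P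
  simp [mem_Atwist, Agr]

variable (R) in
lemma coe_Atwist_neg_one : (Atwist R (-1) : Set VV[X]) = Pinf R := by
  ext P
  simp [mem_Atwist, Pinf, sub_eq_add_neg]

lemma Atwist_mono (h : s ≤ t) : Atwist R s ≤ Atwist R t :=
  fun _ hP n => Rfilt_mono R (by omega) (hP n)

lemma monomial_mem_Atwist_iff {n : ℕ} {f : VV} :
    monomial n f ∈ Atwist R s ↔ f ∈ Rfilt R (n + s) := by
  refine ⟨fun h => by simpa using h n, fun hf m => ?_⟩
  rw [coeff_monomial]
  split_ifs with h
  · exact h ▸ hf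
  · exact (RfiltAddSubgroup R _).zero_mem

lemma monomial_mem_Atwist_and_notMem {n : ℕ} {f : VV} (hfR : f ∈ R) (hf0 : f ≠ 0)
    (hf : ordV f = n + s) : monomial n f ∈ Atwist R s ∧ monomial n f ∉ Atwist R (s - 1) := by
  rw [monomial_mem_Atwist_iff, monomial_mem_Atwist_iff, ← add_sub_assoc, ← hf]
  exact ⟨⟨hfR, Or.inr le_rfl⟩, notMem_Rfilt_ordV_sub_one R hf0⟩

lemma mul_mem_Atwist (hP : P ∈ Atwist R s) (hQ : Q ∈ Atwist R t) :
    P * Q ∈ Atwist R (s + t) := by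
  intro n
  rw [coeff_mul]
  refine (RfiltAddSubgroup R _).sum_mem fun x hx => ?_
  have hn : x.1 + x.2 = n := mem_antidiagonal.1 hx
  exact Rfilt_mono R (by omega) (mul_mem_Rfilt R (hP x.1) (hQ x.2))

lemma sum_antidiagonal_erase_mem_Rfilt {i j : ℕ} (hP : P ∈ Atwist R s) (hQ : Q ∈ Atwist R t)
    (hi : ∀ a < i, P.coeff a ∈ Rfilt R (a + (s - 1)))
    (hj : ∀ b < j, Q.coeff b ∈ Rfilt R (b + (t - 1))) :
    ∑ x ∈ (antidiagonal (i + j)).erase (i, j), P.coeff x.1 * Q.coeff x.2 ∈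
      Rfilt R (i + s + (j + t) - 1) := by
  refine (RfiltAddSubgroup R _).sum_mem fun ⟨a, b⟩ hx => ?_
  obtain ⟨hne, hab⟩ := Finset.mem_erase.1 hx
  have hab : a + b = i + j := mem_antidiagonal.1 hab
  rcases lt_or_ge a i with ha | ha
  · exact Rfilt_mono R (by omega) (mul_mem_Rfilt R (hi a ha) (hQ b))
  · have hb : b < j := by
      by_contra hb
      exact hne (Prod.ext (by omega) (by omega))
    exact Rfilt_mono R (by omega) (mul_mem_Rfilt R (hP a) (hj b hb))

lemma mul_notMem_Atwist_sub_one (hP : P ∈ Atwist R s) (hP' : P ∉ Atwist R (s - 1))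
    (hQ : Q ∈ Atwist R t) (hQ' : Q ∉ Atwist R (t - 1)) : P * Q ∉ Atwist R (s + t - 1) := by
  classical
  simp only [mem_Atwist, not_forall] at hP' hQ'
  set i := Nat.find hP'
  set j := Nat.find hQ'
  have hlead : P.coeff i * Q.coeff j ∉ Rfilt R (i + s + (j + t) - 1) := by
    refine mul_notMem_Rfilt_sub_one R (hP i) ?_ (hQ j) ?_
    · simpa only [add_sub_assoc] using Nat.find_spec hP'
    · simpa only [add_sub_assoc] using Nat.find_spec hQ'
  have hrest := sum_antidiagonal_erase_mem_Rfilt hP hQ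
    (fun a ha => not_not.1 (Nat.find_min hP' ha)) (fun b hb => not_not.1 (Nat.find_min hQ' hb))
  intro hPQ
  have hcoeff := hPQ (i + j)
  have hij : (i, j) ∈ antidiagonal (i + j) := mem_antidiagonal.2 rfl
  rw [coeff_mul, ← Finset.add_sum_erase _ _ hij] at hcoeff
  rw [show ((i + j : ℕ) : ℤ) + (s + t - 1) = i + s + (j + t) - 1 by push_cast; ring] at hcoeff
  exact hlead (((RfiltAddSubgroup R _).add_mem_cancel_right hrest).1 hcoeff)

end Atwist

/-- `P∞` is a prime ideal of `A`; and if some element of `R` has order `n ≥ 1`,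
then `P∞` does not contain `A₊`. -/
theorem Pinf_prime (R : Subring VV) :
    Pinf R ⊆ Agr R ∧
    (0 : Polynomial VV) ∈ Pinf R ∧
    (∀ P ∈ Pinf R, ∀ Q ∈ Pinf R, P + Q ∈ Pinf R) ∧
    (∀ P ∈ Pinf R, -P ∈ Pinf R) ∧
    (∀ P ∈ Agr R, ∀ Q ∈ Pinf R, P * Q ∈ Pinf R) ∧
    Pinf R ≠ Agr R ∧
    (∀ P ∈ Agr R, ∀ Q ∈ Agr R, P * Q ∈ Pinf R → P ∈ Pinf R ∨ Q ∈ Pinf R) ∧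
    ((∃ nn : ℤ, 1 ≤ nn ∧ ∃ h : VV, h ∈ R ∧ h ≠ 0 ∧ ordV h = nn) →
      ¬ ({P ∈ Agr R | P.coeff 0 = 0} ⊆ Pinf R)) := by
  rw [← coe_Atwist_zero, ← coe_Atwist_neg_one]
  have monomial_mem_and_notMem {n : ℕ} {f : VV} (hfR : f ∈ R) (hf0 : f ≠ 0) (hf : ordV f = n) :
      monomial n f ∈ Atwist R 0 ∧ monomial n f ∉ Atwist R (-1) := by
    simpa only [zero_sub] using
      monomial_mem_Atwist_and_notMem (s := 0) hfR hf0 (by rw [hf, add_zero])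
  refine ⟨Atwist_mono (by norm_num), (Atwist R _).zero_mem,
    fun _ hP _ hQ => (Atwist R _).add_mem hP hQ, fun _ hP => (Atwist R _).neg_mem hP,
    fun _ hP _ hQ => by simpa using mul_mem_Atwist hP hQ,
    ?_, ?_, ?_⟩
  · intro h
    obtain ⟨hA, hP⟩ := monomial_mem_and_notMem (n := 0) R.one_mem one_ne_zero ordV_one
    exact hP (SetLike.coe_set_eq.1 h ▸ hA)
  · intro P hP Q hQ hPQ
    by_contra! hPQ'
    exact mul_notMem_Atwist_sub_one (s := 0) (t := 0) hP (by simpa using hPQ'.1) hQ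
      (by simpa using hPQ'.2) (by simpa using hPQ)
  · rintro ⟨_, hn, h, hhR, hh0, rfl⟩ hsub
    obtain ⟨N, hN⟩ := Int.eq_ofNat_of_zero_le (by omega : 0 ≤ ordV h)
    obtain ⟨hA, hP⟩ := monomial_mem_and_notMem hhR hh0 hN
    exact hP (hsub ⟨hA, by rw [coeff_monomial, if_neg (by omega)]⟩)

end
end

section
/- Let a, x be real numbers with a > 0 and 0 < x < a. Then i·θ₁₁(ix | ia) is a positive real number, i.e. there exists a real r > 0 with i·θ₁₁(ix | ia) = r. (Lemma 5.3) -/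
/-!
Pairing the terms `n` and `-n-1` gives the sine series
`θ₁₁(z|τ) = -2 Σ_{m ≥ 0} (-1)^m e^{πiτ(m+1/2)²} sin((2m+1)πz)`. At `τ = ia`, `z = ix` it turns
`iθ₁₁(ix|ia)` into `2 Σ (-1)^m e^{-πa(m+1/2)²} sinh((2m+1)πx)`, and after Jacobi's transformation
`θ₁₁(iz|ia) = i e^{πz²/a} a^{-1/2} θ₁₁(z/a|i/a)` into a positive multiple of
`Σ (-1)^m e^{-π(m+1/2)²/a} sin((2m+1)πx/a)`. Both are alternating Gaussian series
`Σ (-1)^m e^{-b(m+1/2)²} c_m`, and if `b ≥ 3` and `|c_m| ≤ (2m+1) e^{2mβ} c_0` with `2β ≤ b`,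
the `m`-th term is at most `e^{-m}` times the first, so the first term outweighs all the others.
The sinh series qualifies when `a ≥ 1` and `x ≤ a/2`, the sine series when `a ≤ 1`. The
remaining case `a > 1`, `x > a/2` reduces to `a - x` through `θ₁₁(τ - z|τ) = e^{2πiz - πiτ} θ₁₁(z|τ)`.
-/

open Complex

/-- The theta function with odd characteristic:
`θ₁₁(z|τ) = Σ_{n ∈ ℤ} exp(πiτ(n+1/2)² + 2πi(n+1/2)(z+1/2))`. -/
noncomputable def theta11 (z τ : ℂ) : ℂ :=
  ∑' n : ℤ, Complex.exp (Real.pi * Complex.I * τ * ((n : ℂ) + 1 / 2) ^ 2 +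
    2 * Real.pi * Complex.I * ((n : ℂ) + 1 / 2) * (z + 1 / 2))

open Real

lemma Real.sinh_nat_add_one_mul_le {y : ℝ} (hy : 0 ≤ y) (n : ℕ) :
    Real.sinh ((n + 1) * y) ≤ (n + 1) * rexp (n * y) * Real.sinh y := by
  have hcosh : ∀ t : ℝ, 0 ≤ t → Real.cosh t ≤ rexp t := fun t ht => by
    rw [Real.cosh_eq]; linarith [Real.exp_le_exp.mpr (by linarith : -t ≤ t)]
  induction n with
  | zero => simp
  | succ n ih =>
    push_cast
    calc Real.sinh ((n + 1 + 1) * y)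
        = Real.sinh ((n + 1) * y) * Real.cosh y + Real.cosh ((n + 1) * y) * Real.sinh y := by
          rw [← Real.sinh_add]; ring_nf
      _ ≤ (n + 1) * rexp (n * y) * Real.sinh y * rexp y + rexp ((n + 1) * y) * Real.sinh y := by
          gcongr
          exacts [hcosh y hy, hcosh _ (by positivity)]
      _ = (n + 1 + 1) * rexp ((n + 1) * y) * Real.sinh y := by
          rw [add_mul (n : ℝ) 1 y, one_mul, Real.exp_add]; ring

lemma Real.abs_sin_nat_mul_le {θ : ℝ} (h0 : 0 ≤ θ) (hπ : θ ≤ π) (n : ℕ) :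
    |Real.sin (n * θ)| ≤ n * Real.sin θ := by
  have hsin : 0 ≤ Real.sin θ := Real.sin_nonneg_of_nonneg_of_le_pi h0 hπ
  induction n with
  | zero => simp
  | succ n ih =>
    push_cast
    calc |Real.sin ((n + 1) * θ)|
        = |Real.sin (n * θ) * Real.cos θ + Real.cos (n * θ) * Real.sin θ| := by
          rw [← Real.sin_add]; ring_nf
      _ ≤ |Real.sin (n * θ)| * |Real.cos θ| + |Real.cos (n * θ)| * |Real.sin θ| := by
          rw [← abs_mul, ← abs_mul]; exact abs_add_le _ _
      _ ≤ n * Real.sin θ * 1 + 1 * Real.sin θ := by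
          rw [abs_of_nonneg hsin]
          gcongr
          exacts [Real.abs_cos_le_one _, Real.abs_cos_le_one _]
      _ = (n + 1) * Real.sin θ := by ring

lemma tsum_pos_of_abs_le_geometric {u : ℕ → ℝ} {q : ℝ} (hq0 : 0 ≤ q) (hq : q < 1 / 2)
    (hu0 : 0 < u 0) (hu : ∀ m, |u m| ≤ u 0 * q ^ m) : 0 < ∑' m, u m := by
  have hgeom : HasSum (fun m : ℕ => u 0 * q * q ^ m) (u 0 * q * (1 - q)⁻¹) :=
    (hasSum_geometric_of_lt_one hq0 (by linarith)).mul_left _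
  have hsum : Summable u :=
    Summable.of_norm_bounded ((summable_geometric_of_lt_one hq0 (by linarith)).mul_left (u 0)) hu
  have htail : ‖∑' m, u (m + 1)‖ ≤ u 0 * q * (1 - q)⁻¹ :=
    tsum_of_norm_bounded hgeom fun m => by
      simpa [pow_succ, mul_assoc, mul_comm q] using hu (m + 1)
  have hsmall : u 0 * q * (1 - q)⁻¹ < u 0 := by
    rw [← div_eq_mul_inv, div_lt_iff₀ (by linarith)]
    nlinarith
  rw [hsum.tsum_eq_zero_add]
  linarith [neg_abs_le (∑' m, u (m + 1)), Real.norm_eq_abs (∑' m, u (m + 1))]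

lemma tsum_alternating_gaussian_pos {b β : ℝ} {c : ℕ → ℝ} (hb : 3 ≤ b) (hβ : 2 * β ≤ b)
    (hc0 : 0 < c 0) (hc : ∀ m : ℕ, |c m| ≤ (2 * m + 1) * rexp (2 * m * β) * c 0) :
    0 < ∑' m : ℕ, (-1) ^ m * rexp (-b * (m + 1 / 2) ^ 2) * c m := by
  refine tsum_pos_of_abs_le_geometric (Real.exp_nonneg (-1)) ?_ (by simp [hc0, Real.exp_pos])
    fun m => ?_
  · have : 2 < rexp 1 := by linarith [Real.add_one_lt_exp one_ne_zero]
    rw [Real.exp_neg, inv_lt_comm₀ (Real.exp_pos 1) (by norm_num)]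
    linarith
  have hm : (m : ℝ) ≤ m ^ 2 := by exact_mod_cast Nat.le_self_pow two_ne_zero m
  have hm0 : (0 : ℝ) ≤ m := m.cast_nonneg
  have hodd : 2 * (m : ℝ) + 1 ≤ rexp (2 * m) := by linarith [Real.add_one_le_exp (2 * (m : ℝ))]
  have hexp : rexp (-b * (m + 1 / 2) ^ 2) * rexp (2 * m * β) * rexp (2 * m) ≤
      rexp (-b * (0 + 1 / 2) ^ 2) * rexp (-1) ^ m := by
    rw [← Real.exp_add, ← Real.exp_add, ← Real.exp_nat_mul, ← Real.exp_add, Real.exp_le_exp]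
    nlinarith [mul_le_mul_of_nonneg_left hβ hm0]
  calc |(-1) ^ m * rexp (-b * (m + 1 / 2) ^ 2) * c m|
      = rexp (-b * (m + 1 / 2) ^ 2) * |c m| := by simp [abs_mul]
    _ ≤ rexp (-b * (m + 1 / 2) ^ 2) * ((2 * m + 1) * rexp (2 * m * β) * c 0) := by
        gcongr; exact hc m
    _ ≤ rexp (-b * (m + 1 / 2) ^ 2) * (rexp (2 * m) * rexp (2 * m * β) * c 0) := by gcongr
    _ = rexp (-b * (m + 1 / 2) ^ 2) * rexp (2 * m * β) * rexp (2 * m) * c 0 := by ring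
    _ ≤ rexp (-b * (0 + 1 / 2) ^ 2) * rexp (-1) ^ m * c 0 := by gcongr
    _ = (-1) ^ 0 * rexp (-b * ((0 : ℕ) + 1 / 2) ^ 2) * c 0 * rexp (-1) ^ m := by simp; ring

lemma summable_theta11_term (z : ℂ) {τ : ℂ} (hτ : 0 < τ.im) :
    Summable fun n : ℤ => cexp (π * I * τ * ((n : ℂ) + 1 / 2) ^ 2 +
      2 * π * I * ((n : ℂ) + 1 / 2) * (z + 1 / 2)) := by
  refine (((summable_jacobiTheta₂_term_iff (z + 1 / 2 + τ / 2) τ).mpr hτ).mul_left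
    (cexp (π * I * τ / 4 + π * I * (z + 1 / 2)))).congr fun n => ?_
  rw [jacobiTheta₂_term, ← Complex.exp_add]
  ring_nf

lemma cexp_pi_mul_I_mul_nat_add_half (m : ℕ) :
    cexp (π * I * ((m : ℂ) + 1 / 2)) = (-1) ^ m * I := by
  rw [mul_add, Complex.exp_add, mul_comm (π * I : ℂ), Complex.exp_nat_mul, Complex.exp_pi_mul_I,
    show (π * I * (1 / 2) : ℂ) = π / 2 * I by ring, Complex.exp_pi_div_two_mul_I]

theorem theta11_eq_sine_series (z : ℂ) {τ : ℂ} (hτ : 0 < τ.im) :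
    theta11 z τ = -2 * ∑' m : ℕ, (-1) ^ m * cexp (π * I * τ * ((m : ℂ) + 1 / 2) ^ 2) *
      Complex.sin ((2 * m + 1) * π * z) := by
  set f : ℤ → ℂ := fun n => cexp (π * I * τ * ((n : ℂ) + 1 / 2) ^ 2 +
      2 * π * I * ((n : ℂ) + 1 / 2) * (z + 1 / 2)) with hf
  have hs : Summable f := summable_theta11_term z hτ
  have hs₁ : Summable fun m : ℕ => f m := hs.comp_injective Nat.cast_injective
  have hs₂ : Summable fun m : ℕ => f (-(m + 1)) :=
    hs.comp_injective fun m n h => by simpa using h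
  rw [theta11, ← hf, tsum_of_nat_of_neg_add_one hs₁ hs₂, ← hs₁.tsum_add hs₂, ← tsum_mul_left]
  refine tsum_congr fun m => ?_
  have hpos := cexp_pi_mul_I_mul_nat_add_half m
  have hneg : cexp (-(π * I * ((m : ℂ) + 1 / 2))) = -((-1) ^ m * I) := by
    rw [Complex.exp_neg, hpos, mul_inv, ← inv_pow, inv_neg, inv_one, inv_I, mul_neg]
  have hsin := Complex.two_sin ((2 * m + 1) * π * z)
  simp only [hf]
  push_cast
  set w : ℂ := (2 * m + 1) * π * z
  rw [show π * I * τ * ((m : ℂ) + 1 / 2) ^ 2 + 2 * π * I * ((m : ℂ) + 1 / 2) * (z + 1 / 2)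
      = π * I * τ * ((m : ℂ) + 1 / 2) ^ 2 + w * I + π * I * ((m : ℂ) + 1 / 2) by ring,
    show π * I * τ * (-((m : ℂ) + 1) + 1 / 2) ^ 2 +
        2 * π * I * (-((m : ℂ) + 1) + 1 / 2) * (z + 1 / 2)
      = π * I * τ * ((m : ℂ) + 1 / 2) ^ 2 + -w * I + -(π * I * ((m : ℂ) + 1 / 2)) by ring]
  simp only [Complex.exp_add, hpos, hneg]
  linear_combination (-1) ^ m * cexp (π * I * τ * ((m : ℂ) + 1 / 2) ^ 2) * hsin

theorem theta11_I_mul_ofReal_eq_sine_series (z : ℂ) {b : ℝ} (hb : 0 < b) :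
    theta11 z (I * b) = -2 * ∑' m : ℕ, (-1) ^ m * (rexp (-(π * b) * (m + 1 / 2) ^ 2) : ℂ) *
      Complex.sin ((2 * m + 1) * π * z) := by
  rw [theta11_eq_sine_series z (by simpa using hb)]
  congr 2 with m
  push_cast
  ring_nf
  simp only [I_sq]
  ring_nf

theorem theta11_sub_left (z τ : ℂ) :
    theta11 (τ - z) τ = cexp (2 * π * I * z - π * I * τ) * theta11 z τ := by
  rw [theta11, theta11, ← ((Equiv.neg ℤ).trans (Equiv.subRight 2)).tsum_eq, ← tsum_mul_left]
  refine tsum_congr fun n => ?_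
  rw [← Complex.exp_add, Complex.exp_eq_exp_iff_exists_int]
  refine ⟨-(n + 1), ?_⟩
  simp only [Equiv.trans_apply, Equiv.neg_apply, Equiv.subRight_apply]
  push_cast
  ring

theorem theta11_I_mul_I_mul (z : ℂ) {a : ℂ} (ha : 0 < a.re) :
    theta11 (I * z) (I * a) =
      I * cexp (π * z ^ 2 / a) / a ^ (1 / 2 : ℂ) * theta11 (z / a) (I / a) := by
  have ha0 : a ≠ 0 := fun h => by simp [h] at ha
  set b : ℂ := -a / 2 - z + I / 2
  set C : ℂ := -π * a / 4 - π * z + π * I / 2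
  set g : ℤ → ℂ := fun n => cexp (π * I * (I / a) * ((n : ℂ) + 1 / 2) ^ 2 +
    2 * π * I * ((n : ℂ) + 1 / 2) * (z / a + 1 / 2))
  calc theta11 (I * z) (I * a)
      = ∑' n : ℤ, cexp C * cexp (-π * a * n ^ 2 + 2 * π * b * n) := by
        refine tsum_congr fun n => ?_
        rw [← Complex.exp_add]
        congr 1
        linear_combination (π * a * ((n : ℂ) + 1 / 2) ^ 2 + 2 * π * ((n : ℂ) + 1 / 2) * z) * I_sq
    _ = cexp C * (1 / a ^ (1 / 2 : ℂ) * ∑' k : ℤ, cexp (-π / a * (k + I * b) ^ 2)) := by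
        rw [tsum_mul_left, Complex.tsum_exp_neg_quadratic ha]
    _ = cexp C * (1 / a ^ (1 / 2 : ℂ) *
          ∑' k : ℤ, cexp (π * z ^ 2 / a + π * a / 4 + π * z) * g (k - 1)) := by
        congr 2
        refine tsum_congr fun k => ?_
        rw [← Complex.exp_add]
        congr 1
        simp only [b]
        push_cast
        field_simp
        linear_combination (-8 * (2 * k - 1) - 4 * (I ^ 2 + 1) - 8 * I * (-a - 2 * z) -
          4 * (-a - 2 * z) ^ 2 - 4 * (2 * k - 1) ^ 2) * I_sq
    _ = _ := by
        have hshift : ∑' k : ℤ, g (k - 1) = ∑' n : ℤ, g n := (Equiv.subRight (1 : ℤ)).tsum_eq g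
        have hC : cexp C * cexp (π * z ^ 2 / a + π * a / 4 + π * z) = I * cexp (π * z ^ 2 / a) := by
          rw [← Complex.exp_add, show C + (π * z ^ 2 / a + π * a / 4 + π * z)
            = π / 2 * I + π * z ^ 2 / a by ring, Complex.exp_add, Complex.exp_pi_div_two_mul_I]
        rw [tsum_mul_left, hshift]
        change _ = _ * ∑' n : ℤ, g n
        linear_combination (∑' n : ℤ, g n) / a ^ (1 / 2 : ℂ) * hC

lemma I_mul_theta11_eq_sinh_series (a x : ℝ) (ha : 0 < a) :
    I * theta11 (I * x) (I * a) = ((2 * ∑' m : ℕ, (-1) ^ m * rexp (-(π * a) * (m + 1 / 2) ^ 2) *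
      Real.sinh ((2 * m + 1) * (π * x)) : ℝ) : ℂ) := by
  set f : ℕ → ℝ := fun m => (-1) ^ m * rexp (-(π * a) * (m + 1 / 2) ^ 2) *
    Real.sinh ((2 * m + 1) * (π * x))
  have hterm : ∀ m : ℕ, (-1) ^ m * (rexp (-(π * a) * (m + 1 / 2) ^ 2) : ℂ) *
      Complex.sin ((2 * m + 1) * π * (I * x)) = f m * I := by
    intro m
    rw [show (2 * m + 1) * π * (I * x) = (((2 * m + 1) * (π * x) : ℝ) : ℂ) * I by push_cast; ring,
      Complex.sin_mul_I, ← Complex.ofReal_sinh]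
    simp only [f]
    push_cast
    ring
  rw [theta11_I_mul_ofReal_eq_sine_series _ ha, tsum_congr hterm, tsum_mul_right,
    Complex.ofReal_mul, Complex.ofReal_tsum, Complex.ofReal_ofNat]
  linear_combination -2 * (∑' m, (f m : ℂ)) * I_sq

lemma I_mul_theta11_eq_sin_series (a x : ℝ) (ha : 0 < a) :
    I * theta11 (I * x) (I * a) = ((2 * rexp (π * x ^ 2 / a) / √a *
      ∑' m : ℕ, (-1) ^ m * rexp (-(π * a⁻¹) * (m + 1 / 2) ^ 2) *
        Real.sin ((2 * m + 1) * (π * (x / a))) : ℝ) : ℂ) := by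
  set f : ℕ → ℝ := fun m => (-1) ^ m * rexp (-(π * a⁻¹) * (m + 1 / 2) ^ 2) *
    Real.sin ((2 * m + 1) * (π * (x / a)))
  have hterm : ∀ m : ℕ, (-1) ^ m * (rexp (-(π * a⁻¹) * (m + 1 / 2) ^ 2) : ℂ) *
      Complex.sin ((2 * m + 1) * π * (x / a : ℂ)) = f m := by
    intro m
    simp only [f]
    push_cast
    ring_nf
  have hsqrt : (a : ℂ) ^ (1 / 2 : ℂ) = (√a : ℝ) := by
    rw [Real.sqrt_eq_rpow, Complex.ofReal_cpow ha.le]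
    norm_num
  rw [theta11_I_mul_I_mul _ (by simpa using ha),
    show I / (a : ℂ) = I * (a⁻¹ : ℝ) by push_cast; ring,
    theta11_I_mul_ofReal_eq_sine_series _ (inv_pos.mpr ha), tsum_congr hterm, hsqrt]
  push_cast
  linear_combination (-2 * cexp (π * x ^ 2 / a) / (√a : ℂ) * ∑' m, (f m : ℂ)) * I_sq

lemma exists_pos_I_mul_theta11_of_two_mul_le {a x : ℝ} (ha : 1 ≤ a) (hx : 0 < x)
    (hxa : 2 * x ≤ a) : ∃ r : ℝ, 0 < r ∧ I * theta11 (I * x) (I * a) = r := by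
  have hy : 0 ≤ π * x := by positivity
  refine ⟨_, mul_pos two_pos (tsum_alternating_gaussian_pos (β := π * x) ?_ ?_ ?_ fun m => ?_),
    I_mul_theta11_eq_sinh_series a x (by linarith)⟩
  · nlinarith [pi_gt_three]
  · nlinarith [pi_pos]
  · simpa using Real.sinh_pos_iff.mpr (by positivity : 0 < π * x)
  · have h := Real.sinh_nat_add_one_mul_le hy (2 * m)
    push_cast at h
    rw [abs_of_nonneg (Real.sinh_nonneg_iff.mpr (by positivity))]
    convert h using 2
    ring_nf

lemma exists_pos_I_mul_theta11_of_le_one {a x : ℝ} (ha0 : 0 < a) (ha1 : a ≤ 1) (hx : 0 < x)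
    (hxa : x < a) : ∃ r : ℝ, 0 < r ∧ I * theta11 (I * x) (I * a) = r := by
  have hθ0 : 0 < π * (x / a) := by positivity
  have hθπ : π * (x / a) < π := mul_lt_of_lt_one_right pi_pos ((div_lt_one ha0).mpr hxa)
  refine ⟨_, mul_pos (by positivity) (tsum_alternating_gaussian_pos (β := 0) ?_ ?_ ?_ fun m => ?_),
    I_mul_theta11_eq_sin_series a x ha0⟩
  · nlinarith [pi_gt_three, one_le_inv_iff₀.mpr ⟨ha0, ha1⟩]
  · rw [mul_zero]; positivity
  · simpa using Real.sin_pos_of_pos_of_lt_pi hθ0 hθπ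
  · simpa using Real.abs_sin_nat_mul_le hθ0.le hθπ.le (2 * m + 1)

/-- Lemma 5.3. -/
theorem lemma_5_3 (a x : ℝ) (ha : 0 < a) (hx0 : 0 < x) (hxa : x < a) :
    ∃ r : ℝ, 0 < r ∧
      Complex.I * theta11 (Complex.I * (x : ℂ)) (Complex.I * (a : ℂ)) = (r : ℂ) := by
  rcases le_or_gt a 1 with ha1 | ha1
  · exact exists_pos_I_mul_theta11_of_le_one ha ha1 hx0 hxa
  rcases le_or_gt (2 * x) a with hx2 | hx2
  · exact exists_pos_I_mul_theta11_of_two_mul_le ha1.le hx0 hx2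
  obtain ⟨r, hr, hθ⟩ :=
    exists_pos_I_mul_theta11_of_two_mul_le ha1.le (sub_pos.mpr hxa) (by linarith)
  refine ⟨rexp (2 * π * x - π * a) * r, by positivity, ?_⟩
  have hrefl := theta11_sub_left (I * (a - x : ℝ)) (I * a)
  rw [show I * (a : ℂ) - I * (a - x : ℝ) = I * x by push_cast; ring] at hrefl
  rw [hrefl, mul_left_comm, hθ]
  push_cast
  congr 2
  linear_combination (2 * π * (a - x) - π * a : ℂ) * I_sq
end
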